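/- Let q : ℝ → ℝ satisfy (A1) q(0) = q(1) = 0, (A2) q is twice differentiable on [0,1], and (A3) q is strictly concave on [0,1]. Then the function u ↦ q'(u)/(1 + q(u))² is strictly decreasing on [0,1]. -/

import Mathlib

/-! Write `π = g ∘ q` with `g t = t / (1 + t)`, so that `π' = q' / (1 + q)²`. Concavity and the
boundary values give `q ≥ 0` on `[0,1]`; as `g` is concave and strictly increasing for `t > -1`,
`π` is strictly concave on `[0,1]`, hence its derivative is strictly decreasing there. -/

open Set

lemma concaveOn_div_one_add : ConcaveOn ℝ (Ioi (-1)) (fun t : ℝ => t / (1 + t)) := by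
  refine ⟨convex_Ioi _, fun x hx y hy a b ha hb hab => ?_⟩
  simp only [smul_eq_mul, mem_Ioi] at *
  have hx1 : 0 < 1 + x := by linarith
  have hy1 : 0 < 1 + y := by linarith
  obtain rfl : b = 1 - a := by linarith
  have hz1 : 0 < 1 + (a * x + (1 - a) * y) := by
    nlinarith [mul_nonneg ha hx1.le, mul_nonneg hb hy1.le]
  -- after clearing denominators the defect is `a (1 - a) (x - y)²`
  rw [mul_div_assoc', mul_div_assoc', div_add_div _ _ hx1.ne' hy1.ne',
    div_le_div_iff₀ (by positivity) hz1]
  nlinarith [mul_nonneg (mul_nonneg ha hb) (sq_nonneg (x - y))]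

lemma strictMonoOn_div_one_add : StrictMonoOn (fun t : ℝ => t / (1 + t)) (Ioi (-1)) := by
  intro x hx y hy hxy
  simp only [mem_Ioi] at hx hy
  rw [div_lt_div_iff₀ (by linarith) (by linarith)]
  linarith

lemma HasDerivAt.div_one_add {f : ℝ → ℝ} {f' x : ℝ} (hf : HasDerivAt f f' x)
    (hx : 1 + f x ≠ 0) : HasDerivAt (fun y => f y / (1 + f y)) (f' / (1 + f x) ^ 2) x :=
  (hf.fun_div (hf.const_add 1) hx).congr_deriv (by ring)

lemma ConcaveOn.comp_strictConcaveOn_of_mapsTo {E : Type*} [AddCommGroup E] [Module ℝ E]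
    {s : Set E} {t : Set ℝ} {f : E → ℝ} {g : ℝ → ℝ} (hg : ConcaveOn ℝ t g)
    (hf : StrictConcaveOn ℝ s f) (hg' : StrictMonoOn g t) (hst : MapsTo f s t) :
    StrictConcaveOn ℝ s (g ∘ f) := by
  refine ⟨hf.1, fun x hx y hy hxy a b ha hb hab => ?_⟩
  calc a • g (f x) + b • g (f y) ≤ g (a • f x + b • f y) :=
        hg.2 (hst hx) (hst hy) ha.le hb.le hab
    _ < g (f (a • x + b • y)) :=
        hg' (hg.1 (hst hx) (hst hy) ha.le hb.le hab) (hst (hf.1 hx hy ha.le hb.le hab))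
          (hf.2 hx hy hxy ha hb hab)

lemma ConcaveOn.nonneg_on_Icc {f : ℝ → ℝ} {a b : ℝ} (hab : a ≤ b)
    (hf : ConcaveOn ℝ (Icc a b) f) (ha : 0 ≤ f a) (hb : 0 ≤ f b) :
    ∀ x ∈ Icc a b, 0 ≤ f x := fun x hx =>
  (le_min ha hb).trans <| hf.ge_on_segment (left_mem_Icc.2 hab) (right_mem_Icc.2 hab)
    (by rwa [segment_eq_Icc hab])

/-- If `q` satisfies (A1) `q 0 = q 1 = 0`, (A2) `q` twice differentiable on `[0,1]`,
and (A3) `q` strictly concave on `[0,1]`, then `u ↦ q' u / (1 + q u)^2` is strictly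
decreasing on `[0,1]`. -/
theorem pi_deriv_strictAntiOn (q : ℝ → ℝ)
    (hq0 : q 0 = 0) (hq1 : q 1 = 0)
    (hq2 : ∀ u ∈ Set.Icc (0:ℝ) 1, DifferentiableAt ℝ q u ∧ DifferentiableAt ℝ (deriv q) u)
    (hqc : StrictConcaveOn ℝ (Set.Icc (0:ℝ) 1) q) :
    StrictAntiOn (fun u => deriv q u / (1 + q u) ^ 2) (Set.Icc (0:ℝ) 1) := by
  have hq_nonneg := hqc.concaveOn.nonneg_on_Icc zero_le_one hq0.ge hq1.ge
  have hq_maps : MapsTo q (Icc 0 1) (Ioi (-1)) := fun u hu =>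
    (neg_one_lt_zero.trans_le (hq_nonneg u hu) : _)
  have hπ : StrictConcaveOn ℝ (Icc 0 1) (fun u => q u / (1 + q u)) :=
    concaveOn_div_one_add.comp_strictConcaveOn_of_mapsTo hqc strictMonoOn_div_one_add hq_maps
  have hπ' : ∀ u ∈ Icc (0:ℝ) 1,
      HasDerivAt (fun u => q u / (1 + q u)) (deriv q u / (1 + q u) ^ 2) u := fun u hu =>
    (hq2 u hu).1.hasDerivAt.div_one_add (by linarith [hq_nonneg u hu])
  exact (hπ.strictAntiOn_deriv fun u hu => (hπ' u hu).differentiableAt).congr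
    fun u hu => (hπ' u hu).deriv
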